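/- In the dollar auction game, the strategy profile in which both agents always continue bidding (choose 2 at every position) is rational and divergent: Rat_∞(s) and diverg(s) hold for this profile s. -/

import Mathlib

noncomputable section

/-- The two agents. -/
inductive Ag : Type
  | A
  | B
deriving DecidableEq

/-- The set of choices `{1, 2}`. -/
inductive Choice : Type
  | one
  | two
deriving DecidableEq

/-- The polynomial functor whose final coalgebra is the set of finite or
infinite strategy profiles: a node is either an ending position carrying a
utility assignment (no children) or an internal position carrying an agent
and a choice (two children, indexed by `Bool`). -/
def SPF (Agent : Type) : PFunctor.{0} :=
  ⟨(Agent → ℝ) ⊕ (Agent × Choice), fun x => Sum.rec (fun _ => Empty) (fun _ => Bool) x⟩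

/-- Finite or infinite strategy profiles, as the M-type (final coalgebra). -/
def StratProf (Agent : Type) : Type :=
  (SPF Agent).M

/-- The ending position `⟨u⟩`. -/
def leafP {Agent : Type} (u : Agent → ℝ) : StratProf Agent :=
  PFunctor.M.mk ⟨Sum.inl u, fun e => Empty.elim e⟩

/-- The strategy profile `⟨a, c, s₁, s₂⟩`. -/
def nodeP {Agent : Type} (a : Agent) (c : Choice) (s₁ s₂ : StratProf Agent) :
    StratProf Agent :=
  PFunctor.M.mk ⟨Sum.inr (a, c), fun b => bif b then s₂ else s₁⟩

/-- The child selected by choice `c`. -/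
def cchild {Agent : Type} (c : Choice) (s₁ s₂ : StratProf Agent) : StratProf Agent :=
  match c with
  | .one => s₁
  | .two => s₂

/-- `conv s`: following the choices of `s` reaches an ending position after
finitely many steps (inductive definition). -/
inductive Conv {Agent : Type} : StratProf Agent → Prop
  | leaf (u : Agent → ℝ) : Conv (leafP u)
  | node1 (a : Agent) (s₁ s₂ : StratProf Agent) :
      Conv s₁ → Conv (nodeP a Choice.one s₁ s₂)
  | node2 (a : Agent) (s₁ s₂ : StratProf Agent) :
      Conv s₂ → Conv (nodeP a Choice.two s₁ s₂)

/-- The graph of the (partial) utility assignment `ŝ`: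
`UtilR s u` holds iff following the choices of `s` reaches the ending
position `⟨u⟩`. -/
inductive UtilR {Agent : Type} : StratProf Agent → (Agent → ℝ) → Prop
  | leaf (u : Agent → ℝ) : UtilR (leafP u) u
  | node1 (a : Agent) (s₁ s₂ : StratProf Agent) (u : Agent → ℝ) :
      UtilR s₁ u → UtilR (nodeP a Choice.one s₁ s₂) u
  | node2 (a : Agent) (s₁ s₂ : StratProf Agent) (u : Agent → ℝ) :
      UtilR s₂ u → UtilR (nodeP a Choice.two s₁ s₂) u

open Classical in
/-- The utility assignment `ŝ` (an arbitrary default on non-convergent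
profiles). -/
def util {Agent : Type} (s : StratProf Agent) : Agent → ℝ :=
  if h : ∃ u, UtilR s u then h.choose else fun _ => 0

/-- `□P`, the coinductive `always` modality: `P` holds at every position of
the strategy profile (greatest fixed point). -/
def Always {Agent : Type} (P : StratProf Agent → Prop) (s : StratProf Agent) : Prop :=
  ∃ R : StratProf Agent → Prop, R s ∧ ∀ t, R t →
    P t ∧ ∀ a c s₁ s₂, t = nodeP a c s₁ s₂ → R s₁ ∧ R s₂

/-- `PE s`: `s` is always-convergent and the choice at the root of `s` is at
least as good, for the agent who owns the root, as the other choice. -/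
def PE {Agent : Type} (s : StratProf Agent) : Prop :=
  Always Conv s ∧
    (∀ a s₁ s₂, s = nodeP a Choice.one s₁ s₂ → util s₁ a ≥ util s₂ a) ∧
    (∀ a s₁ s₂, s = nodeP a Choice.two s₁ s₂ → util s₂ a ≥ util s₁ a)

/-- Subgame perfect equilibrium: `□PE`. -/
def SPE {Agent : Type} : StratProf Agent → Prop :=
  Always PE

/-- `s =_g s'`: the two strategy profiles have the same underlying game
(coinductive definition). -/
def SameGame {Agent : Type} (s s' : StratProf Agent) : Prop :=
  ∃ R : StratProf Agent → StratProf Agent → Prop, R s s' ∧ ∀ t t', R t t' →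
    (∃ u, t = leafP u ∧ t' = leafP u) ∨
    (∃ a c c' s₁ s₂ s₁' s₂',
      t = nodeP a c s₁ s₂ ∧ t' = nodeP a c' s₁' s₂' ∧ R s₁ s₁' ∧ R s₂ s₂')

/-- `Rat_∞`: rationality for finite or infinite strategy profiles
(coinductive definition). -/
def RatInf {Agent : Type} (s : StratProf Agent) : Prop :=
  ∃ R : StratProf Agent → Prop, R s ∧ ∀ t, R t →
    (∃ u, t = leafP u) ∨
    (∃ a c s₁ s₂ s₁' s₂', t = nodeP a c s₁ s₂ ∧
      SameGame (nodeP a c s₁' s₂') (nodeP a c s₁ s₂) ∧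
      SPE (nodeP a c s₁' s₂') ∧ R (cchild c s₁ s₂))

/-- `diverg`: following the choices never reaches an ending position
(coinductive definition). -/
def Diverg {Agent : Type} (s : StratProf Agent) : Prop :=
  ∃ R : StratProf Agent → Prop, R s ∧ ∀ t, R t →
    ∃ a c s₁ s₂, t = nodeP a c s₁ s₂ ∧ R (cchild c s₁ s₂)

/-- The agent moving at position `n` of an infinite comb game: Alice at even
positions, Bob at odd positions. -/
def agAt (n : ℕ) : Ag :=
  if n % 2 = 0 then Ag.A else Ag.B

/-- Leaf utilities of the dollar auction when the mover quits at position
`n` (with `v = 100` and bid increment `5`): at `n = 2k`, Alice quitting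
yields `(A ↦ -5k, B ↦ 100 - 5k)`; at `n = 2k + 1`, Bob quitting yields
`(B ↦ -5k, A ↦ 100 - 5(k+1))`. -/
def uDollar (n : ℕ) : Ag → ℝ :=
  if n % 2 = 0 then fun x =>
    match x with
    | Ag.A => -5 * ((n / 2 : ℕ) : ℝ)
    | Ag.B => 100 - 5 * ((n / 2 : ℕ) : ℝ)
  else fun x =>
    match x with
    | Ag.A => 100 - 5 * (((n / 2 : ℕ) : ℝ) + 1)
    | Ag.B => -5 * ((n / 2 : ℕ) : ℝ)

/-- One corecursion step for the strategy profile of the dollar auction in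
which both agents always continue bidding (choose `2`). -/
def dollarStep : (ℕ ⊕ (Ag → ℝ)) → (SPF Ag).Obj (ℕ ⊕ (Ag → ℝ))
  | Sum.inr u => ⟨Sum.inl u, fun e => Empty.elim e⟩
  | Sum.inl n =>
      ⟨Sum.inr (agAt n, Choice.two),
        fun b => bif b then Sum.inl (n + 1) else Sum.inr (uDollar n)⟩

/-- The strategy profile of the dollar auction, starting at position `n`, in
which both agents always continue bidding. -/
def dollarAlwaysContinue (n : ℕ) : StratProf Ag :=
  PFunctor.M.corec dollarStep (Sum.inl n)

/-!
Let `onlyContinues a` be the choices under which agent `a` always continues and the other agent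
always quits. The resulting profile is a subgame perfect equilibrium: the mover `a` gains by
continuing because the opponent quits right away, while the other agent, by continuing, would
at best quit two positions later having lost `5` more. At position `n` the equilibrium for
`a = agAt n` continues, as the always-continue profile does, and is played on the same game;
this gives `Rat_∞`, and divergence is immediate.
-/

section Basic

variable {Agent : Type}

theorem leafP_injective : Function.Injective (leafP : (Agent → ℝ) → StratProf Agent) :=
  fun _ _ h => Sum.inl.inj (congrArg Sigma.fst (PFunctor.M.mk_inj h))

theorem leafP_ne_nodeP (u : Agent → ℝ) (a : Agent) (c : Choice) (s₁ s₂ : StratProf Agent) :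
    leafP u ≠ nodeP a c s₁ s₂ := fun h => by
  simpa using congrArg Sigma.fst (PFunctor.M.mk_inj h)

theorem nodeP_inj {a a' : Agent} {c c' : Choice} {s₁ s₂ s₁' s₂' : StratProf Agent}
    (h : nodeP a c s₁ s₂ = nodeP a' c' s₁' s₂') :
    a = a' ∧ c = c' ∧ s₁ = s₁' ∧ s₂ = s₂' := by
  obtain ⟨hlabel, hchildren⟩ := Sigma.mk.inj_iff.mp (PFunctor.M.mk_inj h)
  obtain ⟨rfl, rfl⟩ := Prod.mk.inj (Sum.inr.inj hlabel)
  have hchildren := eq_of_heq hchildren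
  exact ⟨rfl, rfl, congrFun hchildren false, congrFun hchildren true⟩

theorem utilR_leafP_iff {u v : Agent → ℝ} : UtilR (leafP u) v ↔ v = u := by
  refine ⟨fun h => ?_, fun h => h ▸ UtilR.leaf u⟩
  generalize hs : leafP u = s at h
  cases h with
  | leaf => exact leafP_injective hs.symm
  | node1 => exact absurd hs (leafP_ne_nodeP _ _ _ _ _)
  | node2 => exact absurd hs (leafP_ne_nodeP _ _ _ _ _)

theorem UtilR.cchild {a : Agent} {c : Choice} {s₁ s₂ : StratProf Agent} {v : Agent → ℝ}
    (h : UtilR (nodeP a c s₁ s₂) v) : UtilR (cchild c s₁ s₂) v := by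
  generalize hs : nodeP a c s₁ s₂ = s at h
  cases h with
  | leaf => exact absurd hs.symm (leafP_ne_nodeP _ _ _ _ _)
  | node1 _ _ _ _ hw => obtain ⟨rfl, rfl, rfl, rfl⟩ := nodeP_inj hs; exact hw
  | node2 _ _ _ _ hw => obtain ⟨rfl, rfl, rfl, rfl⟩ := nodeP_inj hs; exact hw

theorem UtilR.unique {s : StratProf Agent} {u v : Agent → ℝ} (hu : UtilR s u)
    (hv : UtilR s v) : u = v := by
  induction hu with
  | leaf => exact (utilR_leafP_iff.mp hv).symm
  | node1 _ _ _ _ _ ih => exact ih hv.cchild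
  | node2 _ _ _ _ _ ih => exact ih hv.cchild

theorem UtilR.util_eq {s : StratProf Agent} {u : Agent → ℝ} (h : UtilR s u) : util s = u := by
  have hex : ∃ v, UtilR s v := ⟨u, h⟩
  rw [util, dif_pos hex]
  exact hex.choose_spec.unique h

theorem UtilR.conv {s : StratProf Agent} {u : Agent → ℝ} (h : UtilR s u) : Conv s := by
  induction h with
  | leaf u => exact Conv.leaf u
  | node1 a s₁ s₂ _ _ ih => exact Conv.node1 a s₁ s₂ ih
  | node2 a s₁ s₂ _ _ ih => exact Conv.node2 a s₁ s₂ ih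

theorem always_leafP {P : StratProf Agent → Prop} {u : Agent → ℝ} (h : P (leafP u)) :
    Always P (leafP u) :=
  ⟨(· = leafP u), rfl, by
    rintro t rfl
    exact ⟨h, fun _ _ _ _ hnode => absurd hnode (leafP_ne_nodeP _ _ _ _ _)⟩⟩

theorem pe_leafP (u : Agent → ℝ) : PE (leafP u) :=
  ⟨always_leafP (Conv.leaf u), fun _ _ _ h => absurd h (leafP_ne_nodeP _ _ _ _ _),
    fun _ _ _ h => absurd h (leafP_ne_nodeP _ _ _ _ _)⟩

end Basic

section Comb

variable {Agent : Type} (ag : ℕ → Agent) (ch : ℕ → Choice) (leaf : ℕ → Agent → ℝ)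

def IsComb (s : ℕ → StratProf Agent) : Prop :=
  ∀ n, s n = nodeP (ag n) (ch n) (leafP (leaf n)) (s (n + 1))

def combStep : ℕ ⊕ (Agent → ℝ) → (SPF Agent).Obj (ℕ ⊕ (Agent → ℝ))
  | .inr u => ⟨.inl u, Empty.elim⟩
  | .inl n => ⟨.inr (ag n, ch n), fun b => bif b then .inl (n + 1) else .inr (leaf n)⟩

def comb (n : ℕ) : StratProf Agent :=
  PFunctor.M.corec (combStep ag ch leaf) (.inl n)

theorem isComb_comb : IsComb ag ch leaf (comb ag ch leaf) := by
  intro n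
  have corec_leaf (u : Agent → ℝ) :
      PFunctor.M.corec (combStep ag ch leaf) (.inr u) = leafP u := by
    rw [PFunctor.M.corec_def]
    exact congrArg PFunctor.M.mk (Sigma.ext rfl (heq_of_eq (funext fun e => e.elim)))
  rw [comb, PFunctor.M.corec_def, nodeP]
  refine congrArg PFunctor.M.mk (Sigma.ext rfl (heq_of_eq (funext fun b => ?_)))
  cases b
  · exact corec_leaf (leaf n)
  · rfl

variable {ag ch leaf} {s : ℕ → StratProf Agent}

theorem IsComb.diverg (hs : IsComb ag ch leaf s) (hch : ∀ n, ch n = .two) (n : ℕ) :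
    Diverg (s n) :=
  ⟨fun t => ∃ m, t = s m, ⟨n, rfl⟩, by
    rintro t ⟨m, rfl⟩
    exact ⟨ag m, ch m, _, _, hs m, m + 1, by rw [hch m]; rfl⟩⟩

theorem IsComb.sameGame (hs : IsComb ag ch leaf s) {ch' : ℕ → Choice}
    {t : ℕ → StratProf Agent} (ht : IsComb ag ch' leaf t) (n : ℕ) : SameGame (s n) (t n) := by
  refine ⟨fun x y => (∃ m, x = s m ∧ y = t m) ∨ ∃ u, x = leafP u ∧ y = leafP u,
    .inl ⟨n, rfl, rfl⟩, ?_⟩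
  rintro x y (⟨m, rfl, rfl⟩ | ⟨u, rfl, rfl⟩)
  · exact .inr ⟨ag m, ch m, ch' m, _, _, _, _, hs m, ht m,
      .inr ⟨leaf m, rfl, rfl⟩, .inl ⟨m + 1, rfl, rfl⟩⟩
  · exact .inl ⟨u, rfl, rfl⟩

theorem IsComb.always {P : StratProf Agent → Prop} (hs : IsComb ag ch leaf s)
    (hnode : ∀ m, P (s m)) (hleaf : ∀ m, P (leafP (leaf m))) (n : ℕ) : Always P (s n) := by
  refine ⟨fun t => (∃ m, t = s m) ∨ ∃ m, t = leafP (leaf m), .inl ⟨n, rfl⟩, ?_⟩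
  rintro t (⟨m, rfl⟩ | ⟨m, rfl⟩)
  · refine ⟨hnode m, fun a c s₁ s₂ h => ?_⟩
    obtain ⟨-, -, rfl, rfl⟩ := nodeP_inj ((hs m).symm.trans h)
    exact ⟨.inr ⟨m, rfl⟩, .inl ⟨m + 1, rfl⟩⟩
  · exact ⟨hleaf m, fun _ _ _ _ h => absurd h (leafP_ne_nodeP _ _ _ _ _)⟩

theorem IsComb.utilR_of_eq_one (hs : IsComb ag ch leaf s) {n : ℕ} (hn : ch n = .one) :
    UtilR (s n) (leaf n) := by
  rw [hs n, hn]
  exact UtilR.node1 _ _ _ _ (UtilR.leaf _)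

theorem IsComb.utilR_of_eq_two (hs : IsComb ag ch leaf s) {n : ℕ} (hn : ch n = .two)
    {u : Agent → ℝ} (hu : UtilR (s (n + 1)) u) : UtilR (s n) u := by
  rw [hs n, hn]
  exact UtilR.node2 _ _ _ _ hu

theorem IsComb.pe (hs : IsComb ag ch leaf s) (hconv : ∀ m, Conv (s m)) {n : ℕ}
    (hquit : ch n = .one → util (s (n + 1)) (ag n) ≤ leaf n (ag n))
    (hcont : ch n = .two → leaf n (ag n) ≤ util (s (n + 1)) (ag n)) : PE (s n) := by
  have hutil_leaf : util (leafP (leaf n)) = leaf n := (UtilR.leaf _).util_eq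
  refine ⟨hs.always hconv (fun _ => Conv.leaf _) n, fun _ _ _ h => ?_, fun _ _ _ h => ?_⟩
  all_goals
    obtain ⟨rfl, hc, rfl, rfl⟩ := nodeP_inj ((hs n).symm.trans h)
    rw [hutil_leaf]
  exacts [hquit hc, hcont hc]

theorem IsComb.ratInf (hs : IsComb ag ch leaf s)
    (hspe : ∀ n, ∃ ch' : ℕ → Choice, ch' n = ch n ∧ SPE (comb ag ch' leaf n)) (n : ℕ) :
    RatInf (s n) := by
  refine ⟨fun t => (∃ m, t = s m) ∨ ∃ u, t = leafP u, .inl ⟨n, rfl⟩, ?_⟩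
  rintro t (⟨m, rfl⟩ | ⟨u, rfl⟩)
  · obtain ⟨ch', hch', hequil⟩ := hspe m
    have hcomb : comb ag ch' leaf m =
        nodeP (ag m) (ch m) (leafP (leaf m)) (comb ag ch' leaf (m + 1)) := by
      rw [← hch']; exact isComb_comb ag ch' leaf m
    refine .inr ⟨ag m, ch m, _, _, _, _, hs m, ?_, hcomb ▸ hequil, ?_⟩
    · rw [← hcomb, ← hs m]
      exact (isComb_comb ag ch' leaf).sameGame hs m
    · cases ch m
      exacts [.inr ⟨leaf m, rfl⟩, .inl ⟨m + 1, rfl⟩]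
  · exact .inl ⟨u, rfl⟩

end Comb

theorem agAt_add_one_eq_iff {n : ℕ} {a : Ag} : agAt (n + 1) = a ↔ agAt n ≠ a := by
  unfold agAt
  cases a <;> split_ifs <;> first | omega | decide

theorem agAt_add_two (n : ℕ) : agAt (n + 2) = agAt n := by
  simp only [agAt, Nat.add_mod_right]

theorem uDollar_agAt (n : ℕ) : uDollar n (agAt n) = -5 * (n / 2 : ℕ) := by
  unfold uDollar agAt
  split_ifs <;> rfl

theorem uDollar_add_one_agAt (n : ℕ) :
    uDollar (n + 1) (agAt n) = 100 - 5 * ((n / 2 : ℕ) + 1) := by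
  rcases Nat.mod_two_eq_zero_or_one n with h | h
  · have hdiv : (n + 1) / 2 = n / 2 := by omega
    simp only [uDollar, agAt, h, hdiv, show (n + 1) % 2 = 1 by omega]
    norm_num
  · have hdiv : (n + 1) / 2 = n / 2 + 1 := by omega
    simp only [uDollar, agAt, h, hdiv, show (n + 1) % 2 = 0 by omega]
    norm_num

theorem uDollar_agAt_le_add_one (n : ℕ) : uDollar n (agAt n) ≤ uDollar (n + 1) (agAt n) := by
  rw [uDollar_agAt, uDollar_add_one_agAt]
  linarith

theorem uDollar_add_two_agAt_le (n : ℕ) : uDollar (n + 2) (agAt n) ≤ uDollar n (agAt n) := by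
  have h := uDollar_agAt (n + 2)
  rw [agAt_add_two, show (n + 2) / 2 = n / 2 + 1 by omega] at h
  rw [h, uDollar_agAt]
  push_cast
  linarith

theorem dollarAlwaysContinue_eq_comb :
    dollarAlwaysContinue = comb agAt (fun _ => .two) uDollar := by
  funext n
  refine congrArg (PFunctor.M.corec · _) (funext fun x => ?_)
  cases x <;> rfl

def onlyContinues (a : Ag) (n : ℕ) : Choice :=
  if agAt n = a then .two else .one

theorem utilR_comb_onlyContinues (a : Ag) (n : ℕ) :
    UtilR (comb agAt (onlyContinues a) uDollar n)
      (if agAt n = a then uDollar (n + 1) else uDollar n) := by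
  have hs := isComb_comb agAt (onlyContinues a) uDollar
  split_ifs with hn
  · have hnext : onlyContinues a (n + 1) = .one := if_neg (agAt_add_one_eq_iff.not_left.mpr hn)
    exact hs.utilR_of_eq_two (if_pos hn) (hs.utilR_of_eq_one hnext)
  · exact hs.utilR_of_eq_one (if_neg hn)

theorem spe_comb_onlyContinues (a : Ag) (n : ℕ) :
    SPE (comb agAt (onlyContinues a) uDollar n) := by
  have hs := isComb_comb agAt (onlyContinues a) uDollar
  have hpe (m : ℕ) : PE (comb agAt (onlyContinues a) uDollar m) := by
    refine hs.pe (fun k => (utilR_comb_onlyContinues a k).conv) (fun hquit => ?_)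
      (fun hcont => ?_)
    · have hm : agAt m ≠ a := fun h => by simp [onlyContinues, h] at hquit
      rw [(utilR_comb_onlyContinues a (m + 1)).util_eq, if_pos (agAt_add_one_eq_iff.mpr hm)]
      exact uDollar_add_two_agAt_le m
    · have hm : agAt m = a := by by_contra h; simp [onlyContinues, h] at hcont
      rw [(utilR_comb_onlyContinues a (m + 1)).util_eq,
        if_neg (agAt_add_one_eq_iff.not_left.mpr hm)]
      exact uDollar_agAt_le_add_one m
  exact hs.always hpe (fun _ => pe_leafP _) n

/-- In the dollar auction, the strategy profile in which both agents always
continue bidding (choose 2 at every position) is rational and divergent. -/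
theorem dollar_alwaysContinue_rat_and_diverg :
    RatInf (dollarAlwaysContinue 0) ∧ Diverg (dollarAlwaysContinue 0) := by
  have hs : IsComb agAt (fun _ => .two) uDollar dollarAlwaysContinue :=
    dollarAlwaysContinue_eq_comb ▸ isComb_comb _ _ _
  have hequil (n : ℕ) : ∃ ch : ℕ → Choice, ch n = .two ∧ SPE (comb agAt ch uDollar n) :=
    ⟨onlyContinues (agAt n), if_pos rfl, spe_comb_onlyContinues _ n⟩
  exact ⟨hs.ratInf hequil 0, hs.diverg (fun _ => rfl) 0⟩
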